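/- For the two-armed Dirichlet bandit with finitely supported priors, let n ≥ 2, L > 0, α a finite finitely supported measure, and F a probability distribution with exactly two support points, F = p·δ_1 + (1−p)·δ_0 with p ∈ (0,1). Then the function θ ↦ E_{X~F}[W(α + θ·F + (L−θ)·δ_X, α₂; A_n^1)] = p·W(α + (θp + L − θ)δ_1 + θ(1−p)δ_0, α₂; A_n^1) + (1−p)·W(α + θp·δ_1 + (L−θp)·δ_0, α₂; A_n^1) is decreasing in θ ∈ [0, L]. -/

import Mathlib

/-- Total mass of a finitely supported (signed) measure on ℝ. -/
noncomputable def fmass (α : ℝ →₀ ℝ) : ℝ := α.sum fun _ w => w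

/-- Mean of the normalized measure α / α(ℝ). -/
noncomputable def fmean (α : ℝ →₀ ℝ) : ℝ := (α.sum fun x w => w * x) / fmass α

/-- Value function of the two-armed Dirichlet bandit with finitely supported priors,
defined by backward induction on the discount sequence.  Pulling arm i with prior αᵢ
yields an observation X distributed as αᵢ/αᵢ(ℝ) and updates the prior to αᵢ + δ_X. -/
noncomputable def bW : (ℝ →₀ ℝ) → (ℝ →₀ ℝ) → List ℝ → ℝ
  | _, _, [] => 0
  | α₁, α₂, a :: as =>
      max (a * fmean α₁ +
            (α₁.sum fun x w => w * bW (α₁ + Finsupp.single x 1) α₂ as) / fmass α₁)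
          (a * fmean α₂ +
            (α₂.sum fun y w => w * bW α₁ (α₂ + Finsupp.single y 1) as) / fmass α₂)

/-! ### auxiliary lemmas -/

lemma fmass_add (β γ : ℝ →₀ ℝ) : fmass (β + γ) = fmass β + fmass γ :=
  Finsupp.sum_add_index' (fun _ => rfl) (fun _ _ _ => rfl)

lemma fmass_single (x c : ℝ) : fmass (Finsupp.single x c) = c :=
  Finsupp.sum_single_index rfl

lemma fmass_nonneg {α : ℝ →₀ ℝ} (h : ∀ x, 0 ≤ α x) : 0 ≤ fmass α :=
  Finset.sum_nonneg fun x _ => h x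

lemma single_apply_nonneg (y x : ℝ) : (0:ℝ) ≤ Finsupp.single y (1:ℝ) x := by
  simp only [Finsupp.single_apply]
  split_ifs <;> norm_num

lemma add_single_nonneg {α : ℝ →₀ ℝ} (h : ∀ x, 0 ≤ α x) (y : ℝ) :
    ∀ x, 0 ≤ (α + Finsupp.single y 1 : ℝ →₀ ℝ) x := by
  intro x
  rw [Finsupp.add_apply]
  exact add_nonneg (h x) (single_apply_nonneg y x)

lemma convexOn_finset_sum {ι : Type*} (t : Finset ι) {s : Set ℝ} (hs : Convex ℝ s)
    (f : ι → ℝ → ℝ) (h : ∀ i ∈ t, ConvexOn ℝ s (f i)) :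
    ConvexOn ℝ s (fun u => ∑ i ∈ t, f i u) := by
  classical
  induction t using Finset.induction with
  | empty => simpa using convexOn_const 0 hs
  | insert a s hx ih =>
    simp only [Finset.sum_insert hx]
    exact (h _ (Finset.mem_insert_self _ _)).add
      (ih fun i hi => h i (Finset.mem_insert_of_mem hi))

lemma convexOn_const_mul {s : Set ℝ} {f : ℝ → ℝ} (c : ℝ) (hc : 0 ≤ c)
    (hf : ConvexOn ℝ s f) : ConvexOn ℝ s fun x => c * f x := by
  simpa [smul_eq_mul] using hf.smul hc

lemma convexOn_affine {s : Set ℝ} (hs : Convex ℝ s) (b c : ℝ) :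
    ConvexOn ℝ s fun u => c + b * u := by
  refine ⟨hs, fun x _ y _ a a' ha ha' hab => ?_⟩
  simp only [smul_eq_mul]
  apply le_of_eq
  linear_combination (-c) * hab

lemma convex_increment_mono {s : Set ℝ} {H : ℝ → ℝ} (hH : ConvexOn ℝ s H)
    {x y : ℝ} (hx : x ∈ s) (hx1 : x + 1 ∈ s) (hy : y ∈ s) (hy1 : y + 1 ∈ s)
    (hxy : x ≤ y) : H (x + 1) - H x ≤ H (y + 1) - H y := by
  have hd0 : (0:ℝ) < y + 1 - x := by linarith
  have hl0 : (0:ℝ) ≤ 1 / (y + 1 - x) := by positivity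
  have hl1 : 1 / (y + 1 - x) ≤ 1 := by rw [div_le_one hd0]; linarith
  have h1 := hH.2 hx hy1 hl0 (by linarith : (0:ℝ) ≤ 1 - 1 / (y + 1 - x)) (by ring)
  have h2 := hH.2 hx hy1 (by linarith : (0:ℝ) ≤ 1 - 1 / (y + 1 - x)) hl0 (by ring)
  simp only [smul_eq_mul] at h1 h2
  have hd0' : y + 1 - x ≠ 0 := ne_of_gt hd0
  have e1 : 1 / (y + 1 - x) * x + (1 - 1 / (y + 1 - x)) * (y + 1) = y := by
    field_simp; ring
  have e2 : (1 - 1 / (y + 1 - x)) * x + 1 / (y + 1 - x) * (y + 1) = x + 1 := by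
    field_simp; ring
  rw [e1] at h1
  rw [e2] at h2
  linarith

lemma convexOn_Q {L c₁ c₀ : ℝ} (hc₁ : 0 ≤ c₁) (hc₀ : 0 ≤ c₀)
    {H : ℝ → ℝ} (hH : ConvexOn ℝ (Set.Icc 0 (L + 1)) H) :
    ConvexOn ℝ (Set.Icc 0 L)
      (fun u => (c₁ + u) * H (u + 1) + (c₀ + (L - u)) * H u) := by
  refine ⟨convex_Icc 0 L, fun x hx y hy a b ha hb hab => ?_⟩
  simp only [smul_eq_mul]
  obtain rfl : b = 1 - a := by linarith
  obtain ⟨hx0, hxL⟩ := hx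
  obtain ⟨hy0, hyL⟩ := hy
  set w : ℝ := a * x + (1 - a) * y with hw
  have hxs : x ∈ Set.Icc (0:ℝ) (L+1) := ⟨hx0, by linarith⟩
  have hys : y ∈ Set.Icc (0:ℝ) (L+1) := ⟨hy0, by linarith⟩
  have hx1s : x + 1 ∈ Set.Icc (0:ℝ) (L+1) := ⟨by linarith, by linarith⟩
  have hy1s : y + 1 ∈ Set.Icc (0:ℝ) (L+1) := ⟨by linarith, by linarith⟩
  have hw0 : 0 ≤ w := by nlinarith
  have hwL : w ≤ L := by nlinarith
  have h1 := hH.2 hx1s hy1s ha hb hab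
  have h2 := hH.2 hxs hys ha hb hab
  simp only [smul_eq_mul] at h1 h2
  have e1 : a * (x + 1) + (1 - a) * (y + 1) = w + 1 := by rw [hw]; ring
  rw [e1] at h1
  have h3 : 0 ≤ a * (1 - a) := mul_nonneg ha hb
  have key : 0 ≤ a * (1 - a) * (x - y) * ((H (x+1) - H x) - (H (y+1) - H y)) := by
    rcases le_total x y with hxy | hxy
    · have hm := convex_increment_mono hH hxs hx1s hys hy1s hxy
      have h4 : 0 ≤ (y - x) * ((H (y+1) - H y) - (H (x+1) - H x)) :=
        mul_nonneg (by linarith) (by linarith)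
      nlinarith [mul_nonneg h3 h4]
    · have hm := convex_increment_mono hH hys hy1s hxs hx1s hxy
      have h4 : 0 ≤ (x - y) * ((H (x+1) - H x) - (H (y+1) - H y)) :=
        mul_nonneg (by linarith) (by linarith)
      nlinarith [mul_nonneg h3 h4]
  have hA1 : (c₁ + w) * H (w + 1) ≤ (c₁ + w) * (a * H (x+1) + (1-a) * H (y+1)) :=
    mul_le_mul_of_nonneg_left h1 (by linarith)
  have hA2 : (c₀ + (L - w)) * H w ≤ (c₀ + (L - w)) * (a * H x + (1-a) * H y) :=
    mul_le_mul_of_nonneg_left h2 (by linarith)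
  have eq : a * ((c₁ + x) * H (x + 1) + (c₀ + (L - x)) * H x)
      + (1 - a) * ((c₁ + y) * H (y + 1) + (c₀ + (L - y)) * H y)
      = (c₁ + w) * (a * H (x+1) + (1-a) * H (y+1))
        + (c₀ + (L - w)) * (a * H x + (1-a) * H y)
        + a * (1 - a) * (x - y) * ((H (x+1) - H x) - (H (y+1) - H y)) := by
    rw [hw]; ring
  rw [eq]
  linarith

lemma alpha_sum_expand (α : ℝ →₀ ℝ) (F : ℝ → ℝ) :
    (α.sum fun x w => w * F x)
      = α 1 * F 1 + α 0 * F 0 + ∑ x ∈ α.support \ {0, 1}, α x * F x := by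
  classical
  have h11 : (1:ℝ) ∉ α.support \ ({0,1} : Finset ℝ) := by simp
  have h0i : (0:ℝ) ∉ insert (1:ℝ) (α.support \ ({0,1} : Finset ℝ)) := by simp
  have hsub : α.support ⊆ insert 0 (insert 1 (α.support \ ({0,1} : Finset ℝ))) := by
    intro x hx
    by_cases h0 : x = 0
    · simp [h0]
    by_cases h1 : x = 1
    · simp [h1]
    · simp [Finset.mem_insert, Finset.mem_sdiff, hx, h0, h1]
  rw [Finsupp.sum_of_support_subset α hsub (fun x w => w * F x) (fun i _ => zero_mul _),
    Finset.sum_insert h0i, Finset.sum_insert h11]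
  ring

lemma beta_sum_expand (α : ℝ →₀ ℝ) (u v : ℝ) (F : ℝ → ℝ) :
    ((α + Finsupp.single 1 u + Finsupp.single 0 v).sum fun x w => w * F x)
      = (α 1 + u) * F 1 + (α 0 + v) * F 0 + ∑ x ∈ α.support \ {0, 1}, α x * F x := by
  classical
  set β := α + Finsupp.single 1 u + Finsupp.single 0 v with hβ
  have h11 : (1:ℝ) ∉ α.support \ ({0,1} : Finset ℝ) := by simp
  have h0i : (0:ℝ) ∉ insert (1:ℝ) (α.support \ ({0,1} : Finset ℝ)) := by simp
  have hsub : β.support ⊆ insert 0 (insert 1 (α.support \ ({0,1} : Finset ℝ))) := by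
    intro x hx
    by_cases h0 : x = 0
    · simp [h0]
    by_cases h1 : x = 1
    · simp [h1]
    · have := Finsupp.support_add (g₁ := α + Finsupp.single 1 u) (g₂ := Finsupp.single 0 v) hx
      rcases Finset.mem_union.1 this with h | h
      · rcases Finset.mem_union.1 (Finsupp.support_add h) with h' | h'
        · simp [Finset.mem_insert, Finset.mem_sdiff, h', h0, h1]
        · exact absurd (Finsupp.support_single_subset h') (by simp [h1])
      · exact absurd (Finsupp.support_single_subset h) (by simp [h0])
  rw [Finsupp.sum_of_support_subset β hsub (fun x w => w * F x) (fun i _ => zero_mul _),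
    Finset.sum_insert h0i, Finset.sum_insert h11]
  have hβ1 : β 1 = α 1 + u := by simp [hβ, Finsupp.single_apply]
  have hβ0 : β 0 = α 0 + v := by simp [hβ, Finsupp.single_apply]
  have hrest : ∀ x ∈ α.support \ ({0,1} : Finset ℝ), β x * F x = α x * F x := by
    intro x hx
    simp only [Finset.mem_sdiff, Finset.mem_insert, Finset.mem_singleton] at hx
    push_neg at hx
    have hβx : β x = α x := by
      simp [hβ, Finsupp.single_apply, (Ne.symm hx.2.1), (Ne.symm hx.2.2)]
    rw [hβx]
  rw [Finset.sum_congr rfl hrest, hβ1, hβ0]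
  ring

/-! ### the main convexity lemma -/

lemma bW_convexOn (A : List ℝ) :
    ∀ (α₂ : ℝ →₀ ℝ), (∀ x, 0 ≤ α₂ x) → 0 < fmass α₂ → (∀ a ∈ A, 0 ≤ a) →
    ∀ (α : ℝ →₀ ℝ), (∀ x, 0 ≤ α x) → ∀ L : ℝ, 0 ≤ L → 0 < fmass α + L →
    ConvexOn ℝ (Set.Icc 0 L)
      (fun u => bW (α + Finsupp.single 1 u + Finsupp.single 0 (L - u)) α₂ A) := by
  induction A with
  | nil =>
    intro α₂ _ _ _ α _ L _ _
    have h0 : (fun u => bW (α + Finsupp.single 1 u + Finsupp.single 0 (L - u)) α₂ [])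
        = fun _ => (0:ℝ) := by
      funext u; rw [bW]
    rw [h0]
    exact convexOn_const 0 (convex_Icc 0 L)
  | cons a as ih =>
    intro α₂ hα₂ hm₂ hA α hα L hL hM
    classical
    have ha : 0 ≤ a := hA a (by simp)
    have has : ∀ b ∈ as, 0 ≤ b := fun b hb => hA b (by simp [hb])
    have hM0 : fmass α + L ≠ 0 := ne_of_gt hM
    set Sα : ℝ := α.sum fun x w => w * x with hSα
    set t : Finset ℝ := α.support \ {0, 1} with ht
    set G : ℝ → ℝ :=
      fun v => bW (α + Finsupp.single 1 v + Finsupp.single 0 (L + 1 - v)) α₂ as with hG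
    set R : ℝ → ℝ → ℝ := fun x u =>
      bW ((α + Finsupp.single x 1) + Finsupp.single 1 u + Finsupp.single 0 (L - u)) α₂ as
      with hR
    set F1 : ℝ → ℝ := fun u => (1/(fmass α + L)) *
      ((a * Sα + a * u) +
        ((α 1 + u) * G (u + 1) + (α 0 + (L - u)) * G u + ∑ x ∈ t, α x * R x u)) with hF1
    set F2 : ℝ → ℝ := fun u => a * fmean α₂ +
      ∑ y ∈ α₂.support, (α₂ y / fmass α₂) *
        bW (α + Finsupp.single 1 u + Finsupp.single 0 (L - u))
          (α₂ + Finsupp.single y 1) as with hF2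
    have hfun : ∀ u, bW (α + Finsupp.single 1 u + Finsupp.single 0 (L - u)) α₂ (a :: as)
        = max (F1 u) (F2 u) := by
      intro u
      rw [bW]
      set β := α + Finsupp.single 1 u + Finsupp.single 0 (L - u) with hβ
      congr 1
      · -- arm 1
        have hmass : fmass β = fmass α + L := by
          rw [hβ, fmass_add, fmass_add, fmass_single, fmass_single]; ring
        have hnum : (β.sum fun x w => w * x) = Sα + u := by
          rw [hβ, beta_sum_expand α u (L - u) (fun x => x), hSα,
            alpha_sum_expand α (fun x => x)]
          ring
        have hmean : fmean β = (Sα + u) / (fmass α + L) := by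
          rw [fmean, hnum, hmass]
        have hsum : (β.sum fun x w => w * bW (β + Finsupp.single x 1) α₂ as)
            = (α 1 + u) * G (u + 1) + (α 0 + (L - u)) * G u + ∑ x ∈ t, α x * R x u := by
          rw [hβ, beta_sum_expand α u (L - u)
            (fun x => bW ((α + Finsupp.single 1 u + Finsupp.single 0 (L - u))
              + Finsupp.single x 1) α₂ as)]
          have e1 : (α + Finsupp.single 1 u + Finsupp.single 0 (L - u))
              + Finsupp.single (1:ℝ) 1
              = α + Finsupp.single 1 (u + 1) + Finsupp.single 0 (L + 1 - (u + 1)) := by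
            rw [show L + 1 - (u + 1) = L - u by ring, Finsupp.single_add]
            abel
          have e0 : (α + Finsupp.single 1 u + Finsupp.single 0 (L - u))
              + Finsupp.single (0:ℝ) 1
              = α + Finsupp.single 1 u + Finsupp.single 0 (L + 1 - u) := by
            rw [show L + 1 - u = (L - u) + 1 by ring, Finsupp.single_add]
            abel
          have hGu1 : bW ((α + Finsupp.single 1 u + Finsupp.single 0 (L - u))
              + Finsupp.single (1:ℝ) 1) α₂ as = G (u + 1) := by
            rw [e1, hG]
          have hGu : bW ((α + Finsupp.single 1 u + Finsupp.single 0 (L - u))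
              + Finsupp.single (0:ℝ) 1) α₂ as = G u := by
            rw [e0, hG]
          rw [hGu1, hGu]
          congr 1
          apply Finset.sum_congr rfl
          intro x hx
          congr 1
          rw [hR]
          congr 1
          abel
        rw [hmean, hsum, hmass, hF1]
        field_simp
      · -- arm 2
        rw [hF2]
        congr 1
        have hsum2 : (α₂.sum fun y w => w * bW β (α₂ + Finsupp.single y 1) as)
            = ∑ y ∈ α₂.support, α₂ y * bW β (α₂ + Finsupp.single y 1) as := rfl
        rw [hsum2, Finset.sum_div]
        apply Finset.sum_congr rfl
        intro y _
        rw [hβ]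
        ring
    have hfun' : (fun u => bW (α + Finsupp.single 1 u + Finsupp.single 0 (L - u)) α₂ (a :: as))
        = fun u => max (F1 u) (F2 u) := funext hfun
    rw [hfun']
    have hGconv : ConvexOn ℝ (Set.Icc 0 (L + 1)) G := by
      rw [hG]
      exact ih α₂ hα₂ hm₂ has α hα (L + 1) (by linarith) (by linarith)
    have hconv1 : ConvexOn ℝ (Set.Icc 0 L) F1 := by
      rw [hF1]
      refine convexOn_const_mul _ (by positivity) ?_
      refine (convexOn_affine (convex_Icc 0 L) a (a * Sα)).add ?_
      refine (convexOn_Q (hα 1) (hα 0) hGconv).add ?_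
      refine convexOn_finset_sum t (convex_Icc 0 L) (fun x u => α x * R x u) ?_
      intro x _
      refine convexOn_const_mul _ (hα x) ?_
      rw [hR]
      refine ih α₂ hα₂ hm₂ has (α + Finsupp.single x 1) (add_single_nonneg hα x) L hL ?_
      rw [fmass_add, fmass_single]
      linarith
    have hconv2 : ConvexOn ℝ (Set.Icc 0 L) F2 := by
      rw [hF2]
      refine (convexOn_const _ (convex_Icc 0 L)).add ?_
      refine convexOn_finset_sum α₂.support (convex_Icc 0 L)
        (fun y u => (α₂ y / fmass α₂) *
          bW (α + Finsupp.single 1 u + Finsupp.single 0 (L - u))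
            (α₂ + Finsupp.single y 1) as) ?_
      intro y _
      refine convexOn_const_mul _ (div_nonneg (hα₂ y) (le_of_lt hm₂)) ?_
      refine ih (α₂ + Finsupp.single y 1) (add_single_nonneg hα₂ y) ?_ has α hα L hL hM
      rw [fmass_add, fmass_single]
      linarith
    exact hconv1.sup hconv2
theorem bW_two_point_decreasing (p L : ℝ) (hp : p ∈ Set.Ioo (0 : ℝ) 1) (hL : 0 < L)
    (α α₂ : ℝ →₀ ℝ) (hα : ∀ x, 0 ≤ α x)
    (hα₂ : ∀ x, 0 ≤ α₂ x) (hα₂m : 0 < fmass α₂)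
    (A : List ℝ) (hA : ∀ a ∈ A, 0 ≤ a) (hlen : 1 ≤ A.length) :
    AntitoneOn
      (fun θ =>
        p * bW (α + Finsupp.single 1 (θ * p + L - θ) + Finsupp.single 0 (θ * (1 - p))) α₂ A +
        (1 - p) * bW (α + Finsupp.single 1 (θ * p) + Finsupp.single 0 (L - θ * p)) α₂ A)
      (Set.Icc 0 L) := by
  obtain ⟨hp0, hp1⟩ := hp
  have hM : 0 < fmass α + L := by
    have := fmass_nonneg hα
    linarith
  have hg := bW_convexOn A α₂ hα₂ hα₂m hA α hα L (le_of_lt hL) hM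
  intro θ₁ hθ₁ θ₂ hθ₂ h12
  obtain ⟨hθ₁0, hθ₁L⟩ := hθ₁
  obtain ⟨hθ₂0, hθ₂L⟩ := hθ₂
  simp only
  rw [show θ₁ * (1 - p) = L - (θ₁ * p + L - θ₁) by ring,
    show θ₂ * (1 - p) = L - (θ₂ * p + L - θ₂) by ring]
  rcases eq_or_lt_of_le hθ₁L with hE | hθ₁L'
  · -- θ₁ = L forces θ₂ = L
    have hE2 : θ₂ = L := le_antisymm hθ₂L (hE ▸ h12)
    rw [hE, hE2]
  · set D : ℝ := L - θ₁ with hD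
    have hD0 : 0 < D := by rw [hD]; linarith
    have hD0' : D ≠ 0 := ne_of_gt hD0
    set l₁ : ℝ := (θ₂ - θ₁) * p / D with hl₁
    set l₂ : ℝ := (θ₂ - θ₁) * (1 - p) / D with hl₂
    have hl₁0 : 0 ≤ l₁ := by
      apply div_nonneg _ (le_of_lt hD0)
      nlinarith
    have hl₁1 : l₁ ≤ 1 := by
      rw [hl₁, div_le_one hD0, hD]
      nlinarith
    have hl₂0 : 0 ≤ l₂ := by
      apply div_nonneg _ (le_of_lt hD0)
      nlinarith
    have hl₂1 : l₂ ≤ 1 := by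
      rw [hl₂, div_le_one hD0, hD]
      nlinarith
    have hmema : θ₁ * p ∈ Set.Icc (0:ℝ) L := by
      constructor
      · nlinarith
      · nlinarith
    have hmemb : θ₁ * p + L - θ₁ ∈ Set.Icc (0:ℝ) L := by
      constructor
      · nlinarith
      · nlinarith
    have h1 := hg.2 hmema hmemb (by linarith : (0:ℝ) ≤ 1 - l₁) hl₁0 (by ring)
    have h2 := hg.2 hmema hmemb hl₂0 (by linarith : (0:ℝ) ≤ 1 - l₂) (by ring)
    simp only [smul_eq_mul] at h1 h2
    rw [show (1 - l₁) * (θ₁ * p) + l₁ * (θ₁ * p + L - θ₁) = θ₂ * p by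
      rw [hl₁]; field_simp; ring] at h1
    rw [show l₂ * (θ₁ * p) + (1 - l₂) * (θ₁ * p + L - θ₁) = θ₂ * p + L - θ₂ by
      rw [hl₂]; field_simp; ring] at h2
    have hc : p * l₂ = (1 - p) * l₁ := by
      rw [hl₁, hl₂]; ring
    set ga := bW (α + Finsupp.single 1 (θ₁ * p) + Finsupp.single 0 (L - θ₁ * p)) α₂ A
    set gb := bW (α + Finsupp.single 1 (θ₁ * p + L - θ₁) +
      Finsupp.single 0 (L - (θ₁ * p + L - θ₁))) α₂ A
    have H1 := mul_le_mul_of_nonneg_left h1 (by linarith : (0:ℝ) ≤ 1 - p)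
    have H2 := mul_le_mul_of_nonneg_left h2 (le_of_lt hp0)
    have e : p * (l₂ * ga + (1 - l₂) * gb) + (1 - p) * ((1 - l₁) * ga + l₁ * gb)
        = (1 - p) * ga + p * gb := by
      linear_combination (ga - gb) * hc
    linarith [H1, H2, e]
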